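/- Let Ω ⊂ ℂⁿ be open, let u be a real-valued C² plurisubharmonic function on Ω with det H(u) = ψ, where ψ is a positive continuous function on Ω. Let ε > 0 and let z ∈ Ω be such that the closed ball B̄(z,ε) ⊂ Ω. Then Σ_{i,j} u^{ij̄}(z) (u_{ij̄})_ε(z) ≥ n ψ(z)^{−1/n} (ψ^{1/n})_ε(z), where for a continuous function f, f_ε(z) := (1/λ(B(z,ε))) ∫_{B(z,ε)} f dλ denotes its average over B(z,ε). -/

import Mathlib

open MeasureTheory Complex Metric Matrix
open scoped ComplexOrder

noncomputable section

instance (n : ℕ) : MeasureSpace (EuclideanSpace ℂ (Fin n)) :=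
  { volume := Measure.map (WithLp.toLp 2) (volume : Measure (Fin n → ℂ)) }

/-- The Wirtinger derivative `∂f/∂z_j`. -/
def wdz {n : ℕ} (j : Fin n) (f : EuclideanSpace ℂ (Fin n) → ℂ)
    (z : EuclideanSpace ℂ (Fin n)) : ℂ :=
  (1 / 2) * (fderiv ℝ f z (EuclideanSpace.single j 1)
    - Complex.I * fderiv ℝ f z (EuclideanSpace.single j Complex.I))

/-- The conjugate Wirtinger derivative `∂f/∂z̄_j`. -/
def wdzbar {n : ℕ} (j : Fin n) (f : EuclideanSpace ℂ (Fin n) → ℂ)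
    (z : EuclideanSpace ℂ (Fin n)) : ℂ :=
  (1 / 2) * (fderiv ℝ f z (EuclideanSpace.single j 1)
    + Complex.I * fderiv ℝ f z (EuclideanSpace.single j Complex.I))

/-- The complex Hessian `(u_{i j̄}) = (∂²u/∂z_i∂z̄_j)` of a real-valued function. -/
def cHess {n : ℕ} (u : EuclideanSpace ℂ (Fin n) → ℝ) (z : EuclideanSpace ℂ (Fin n)) :
    Matrix (Fin n) (Fin n) ℂ :=
  Matrix.of fun i j => wdz i (fun w => wdzbar j (fun v => ((u v : ℝ) : ℂ)) w) z

/-- `Δu = Σ_j u_{j j̄}` (one quarter of the real Laplacian). -/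
def cLap {n : ℕ} (u : EuclideanSpace ℂ (Fin n) → ℝ) (z : EuclideanSpace ℂ (Fin n)) : ℝ :=
  ((cHess u z).trace).re

/-- `(u^{i j̄})`, the transposed inverse of the complex Hessian. -/
def cHessInvT {n : ℕ} (u : EuclideanSpace ℂ (Fin n) → ℝ) (z : EuclideanSpace ℂ (Fin n)) :
    Matrix (Fin n) (Fin n) ℂ :=
  ((cHess u z)⁻¹)ᵀ

/-! Fix `A = H(u)(z)` and `w` in the ball. Writing `A⁻¹ = C*C`, the matrix `C H(u)(w) C*` is
positive semidefinite with trace `tr(A⁻¹ H(u)(w))` and determinant `ψ(w)/ψ(z)`, so AM-GM on its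
eigenvalues gives `u^{ij̄}(z) u_{ij̄}(w) ≥ n ψ(z)^{-1/n} ψ(w)^{1/n}` pointwise. The left side is
linear in the entries of `H(u)(w)`, so averaging over the ball gives the theorem. -/

instance (n : ℕ) : IsFiniteMeasureOnCompacts (volume : Measure (EuclideanSpace ℂ (Fin n))) :=
  Measure.IsFiniteMeasureOnCompacts.map _ (PiLp.homeomorph 2 fun _ : Fin n ↦ ℂ).symm

namespace MeasureTheory

variable {α 𝕜 E : Type*} [MeasurableSpace α] {μ : Measure α} [RCLike 𝕜]
  [NormedAddCommGroup E] [NormedSpace ℝ E]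

theorem average_finsetSum {ι : Type*} (s : Finset ι) {f : ι → α → E}
    (hf : ∀ i ∈ s, Integrable (f i) μ) : ⨍ x, ∑ i ∈ s, f i x ∂μ = ∑ i ∈ s, ⨍ x, f i x ∂μ := by
  simp only [average_eq, integral_finsetSum s hf, Finset.smul_sum]

theorem average_const_mul (c : 𝕜) (f : α → 𝕜) : ⨍ x, c * f x ∂μ = c * ⨍ x, f x ∂μ := by
  simp only [average_eq, integral_const_mul, mul_smul_comm]

theorem average_re {f : α → 𝕜} (hf : Integrable f μ) :
    ⨍ x, RCLike.re (f x) ∂μ = RCLike.re (⨍ x, f x ∂μ) := by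
  rw [average_eq, average_eq, integral_re hf, RCLike.smul_re, smul_eq_mul]

theorem average_mono {f g : α → ℝ} (hf : Integrable f μ) (hg : Integrable g μ) (h : f ≤ᵐ[μ] g) :
    ⨍ x, f x ∂μ ≤ ⨍ x, g x ∂μ := by
  simp only [average_eq, smul_eq_mul]
  exact mul_le_mul_of_nonneg_left (integral_mono_ae hf hg h) (by positivity)

variable {m n : Type*} [Fintype m] [Fintype n]

theorem integrable_trace_mul (C : Matrix m n 𝕜) {F : α → Matrix n m 𝕜}
    (hF : ∀ i j, Integrable (fun x ↦ F x i j) μ) : Integrable (fun x ↦ (C * F x).trace) μ := by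
  simp only [trace, diag, mul_apply]
  exact integrable_finsetSum _ fun i _ ↦ integrable_finsetSum _ fun j _ ↦ (hF j i).const_mul _

theorem average_trace_mul (C : Matrix m n 𝕜) {F : α → Matrix n m 𝕜}
    (hF : ∀ i j, Integrable (fun x ↦ F x i j) μ) :
    ⨍ x, (C * F x).trace ∂μ = (C * of fun i j ↦ ⨍ x, F x i j ∂μ).trace := by
  simp only [trace, diag, mul_apply, of_apply]
  rw [average_finsetSum (f := fun i x ↦ ∑ j, C i j * F x j i) _
    fun i _ ↦ integrable_finsetSum _ fun j _ ↦ (hF j i).const_mul _]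
  refine Finset.sum_congr rfl fun i _ ↦ ?_
  rw [average_finsetSum (f := fun j x ↦ C i j * F x j i) _ fun j _ ↦ (hF j i).const_mul _]
  simp only [average_const_mul]

end MeasureTheory

namespace Matrix

variable {n 𝕜 : Type*} [Fintype n]

theorem sum_sum_transpose_mul_eq_trace_mul {m R : Type*} [Fintype m]
    [NonUnitalNonAssocSemiring R] (A : Matrix m n R) (B : Matrix n m R) :
    ∑ i, ∑ j, Aᵀ i j * B i j = (A * B).trace := by
  simp only [trace, diag, mul_apply, transpose_apply]
  exact Finset.sum_comm

variable [DecidableEq n] [RCLike 𝕜]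

theorem PosSemidef.card_mul_rpow_det_le_re_trace {A : Matrix n n 𝕜} (hA : A.PosSemidef) {d : ℝ}
    (hd : A.det = d) :
    (Fintype.card n : ℝ) * d ^ (1 / Fintype.card n : ℝ) ≤ RCLike.re A.trace := by
  rcases (Fintype.card n).eq_zero_or_pos with hn | hn
  · have hempty : IsEmpty n := Fintype.card_eq_zero_iff.mp hn
    simp [trace]
  have hdet : d = ∏ i, hA.1.eigenvalues i := by
    apply RCLike.ofReal_injective (K := 𝕜)
    rw [← hd, hA.1.det_eq_prod_eigenvalues, RCLike.ofReal_prod]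
  have htr : RCLike.re A.trace = ∑ i, hA.1.eigenvalues i := by
    simp [hA.1.trace_eq_sum_eigenvalues]
  have amgm := Real.geom_mean_le_arith_mean Finset.univ (fun _ ↦ 1) hA.1.eigenvalues
    (fun _ _ ↦ zero_le_one) (by simpa using hn) (fun i _ ↦ hA.eigenvalues_nonneg i)
  simp only [Real.rpow_one, Finset.sum_const, Finset.card_univ, nsmul_eq_mul, mul_one, one_mul]
    at amgm
  rwa [hdet, htr, one_div, ← le_div_iff₀' (by positivity)]

open scoped MatrixOrder in
theorem PosDef.card_mul_rpow_div_le_re_trace_inv_mul {A B : Matrix n n 𝕜} (hA : A.PosDef)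
    (hB : B.PosSemidef) {a b : ℝ} (ha : A.det = a) (hb : B.det = b) :
    (Fintype.card n : ℝ) * (b / a) ^ (1 / Fintype.card n : ℝ) ≤ RCLike.re (A⁻¹ * B).trace := by
  obtain ⟨C, hC⟩ := CStarAlgebra.nonneg_iff_eq_star_mul_self.mp hA.inv.posSemidef.nonneg
  rw [star_eq_conjTranspose] at hC
  have htr : (A⁻¹ * B).trace = (C * B * Cᴴ).trace := by
    rw [hC, Matrix.mul_assoc, trace_mul_comm, Matrix.mul_assoc]
  have hdet : (C * B * Cᴴ).det = (b / a : ℝ) := by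
    have hCC : star C.det * C.det = (a : 𝕜)⁻¹ := by
      rw [← det_conjTranspose, ← det_mul, ← hC, det_nonsing_inv, ha, Ring.inverse_eq_inv]
    rw [det_mul, det_mul, det_conjTranspose, hb, RCLike.ofReal_div]
    linear_combination (b : 𝕜) * hCC
  rw [htr]
  exact (hB.mul_mul_conjTranspose_same C).card_mul_rpow_det_le_re_trace hdet

end Matrix

theorem cHess_apply_continuousOn {n : ℕ} {Ω : Set (EuclideanSpace ℂ (Fin n))} (hΩ : IsOpen Ω)
    {u : EuclideanSpace ℂ (Fin n) → ℝ} (hu : ContDiffOn ℝ 2 u Ω) (i j : Fin n) :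
    ContinuousOn (fun w ↦ cHess u w i j) Ω := by
  have hf : ContDiffOn ℝ 2 (fun x ↦ ((u x : ℝ) : ℂ)) Ω :=
    Complex.ofRealCLM.contDiff.comp_contDiffOn hu
  have hg : ContDiffOn ℝ 1 (wdzbar j fun v ↦ ((u v : ℝ) : ℂ)) Ω := by
    have hD : ∀ v, ContDiffOn ℝ 1 (fun w ↦ fderiv ℝ (fun x ↦ ((u x : ℝ) : ℂ)) w v) Ω :=
      fun v ↦ (hf.fderiv_of_isOpen hΩ le_rfl).clm_apply contDiffOn_const
    exact contDiffOn_const.mul ((hD _).add (contDiffOn_const.mul (hD _)))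
  have hDg : ∀ v, ContinuousOn (fun w ↦ fderiv ℝ (wdzbar j fun v ↦ ((u v : ℝ) : ℂ)) w v) Ω :=
    fun v ↦ (hg.continuousOn_fderiv_of_isOpen hΩ le_rfl).clm_apply continuousOn_const
  exact continuousOn_const.mul ((hDg _).sub (continuousOn_const.mul (hDg _)))

theorem ContinuousOn.integrableOn_ball {X E : Type*} [MetricSpace X] [ProperSpace X]
    [MeasurableSpace X] [OpensMeasurableSpace X] {μ : Measure X} [IsFiniteMeasureOnCompacts μ]
    [NormedAddCommGroup E] {f : X → E} {x : X} {r : ℝ} (hf : ContinuousOn f (closedBall x r)) :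
    IntegrableOn f (ball x r) μ :=
  (hf.integrableOn_compact (isCompact_closedBall x r)).mono_set ball_subset_closedBall

theorem hessian_average_inequality_general
    (n : ℕ) (Ω : Set (EuclideanSpace ℂ (Fin n))) (hΩ : IsOpen Ω)
    (u ψ : EuclideanSpace ℂ (Fin n) → ℝ)
    (hu : ContDiffOn ℝ 2 u Ω)
    (hpsh : ∀ w ∈ Ω, (cHess u w).PosSemidef)
    (hψc : ContinuousOn ψ Ω)
    (hψpos : ∀ w ∈ Ω, 0 < ψ w)
    (hMA : ∀ w ∈ Ω, (cHess u w).det = (ψ w : ℂ))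
    (ε : ℝ)
    (z : EuclideanSpace ℂ (Fin n)) (hz : z ∈ Ω) (hball : closedBall z ε ⊆ Ω) :
    (n : ℝ) * ψ z ^ (-(1 : ℝ) / n) * (⨍ w in ball z ε, ψ w ^ ((1 : ℝ) / n))
      ≤ (∑ i, ∑ j, cHessInvT u z i j * ⨍ w in ball z ε, cHess u w i j).re := by
  have hψz := hψpos z hz
  have hA : (cHess u z).PosDef :=
    (hpsh z hz).posDef_iff_det_ne_zero.mpr (by simp [hMA z hz, hψz.ne'])
  have hH : ∀ i j, IntegrableOn (fun w ↦ cHess u w i j) (ball z ε) := fun i j ↦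
    ((cHess_apply_continuousOn hΩ hu i j).mono hball).integrableOn_ball
  have hψ : IntegrableOn (fun w ↦ ψ w ^ ((1 : ℝ) / n)) (ball z ε) :=
    ((hψc.mono hball).rpow_const fun _ _ ↦ Or.inr (by positivity)).integrableOn_ball
  have hpointwise : ∀ w ∈ ball z ε, (n : ℝ) * ψ z ^ (-(1 : ℝ) / n) * ψ w ^ ((1 : ℝ) / n)
      ≤ ((cHess u z)⁻¹ * cHess u w).trace.re := by
    intro w hw
    have hw : w ∈ Ω := hball (ball_subset_closedBall hw)
    have key := hA.card_mul_rpow_div_le_re_trace_inv_mul (hpsh w hw) (hMA z hz) (hMA w hw)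
    rw [Fintype.card_fin] at key
    calc _ = (n : ℝ) * (ψ w / ψ z) ^ ((1 : ℝ) / n) := by
          rw [Real.div_rpow (hψpos w hw).le hψz.le, neg_div, Real.rpow_neg hψz.le]
          ring
      _ ≤ _ := key
  calc (n : ℝ) * ψ z ^ (-(1 : ℝ) / n) * (⨍ w in ball z ε, ψ w ^ ((1 : ℝ) / n))
      = ⨍ w in ball z ε, (n : ℝ) * ψ z ^ (-(1 : ℝ) / n) * ψ w ^ ((1 : ℝ) / n) :=
        (average_const_mul _ _).symm
    _ ≤ ⨍ w in ball z ε, ((cHess u z)⁻¹ * cHess u w).trace.re :=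
        average_mono (hψ.const_mul _) (integrable_trace_mul _ hH).re
          (ae_restrict_of_forall_mem measurableSet_ball hpointwise)
    _ = ((cHess u z)⁻¹ * Matrix.of fun i j ↦ ⨍ w in ball z ε, cHess u w i j).trace.re := by
        rw [← average_trace_mul _ hH]
        exact average_re (integrable_trace_mul _ hH)
    _ = _ := by
        rw [← Matrix.sum_sum_transpose_mul_eq_trace_mul]
        rfl

/-- For a plurisubharmonic solution of `det H(u) = ψ > 0`, the ball averages
of the complex Hessian satisfy `Σ u^{i j̄}(z) (u_{i j̄})_ε(z) ≥ n ψ(z)^{-1/n} (ψ^{1/n})_ε(z)`. -/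
theorem hessian_average_inequality
    (n : ℕ) (Ω : Set (EuclideanSpace ℂ (Fin n))) (hΩ : IsOpen Ω)
    (u ψ : EuclideanSpace ℂ (Fin n) → ℝ)
    (hu : ContDiffOn ℝ 2 u Ω)
    (hpsh : ∀ w ∈ Ω, (cHess u w).PosSemidef)
    (hψc : ContinuousOn ψ Ω)
    (hψpos : ∀ w ∈ Ω, 0 < ψ w)
    (hMA : ∀ w ∈ Ω, (cHess u w).det = (ψ w : ℂ))
    (ε : ℝ) (hε : 0 < ε)
    (z : EuclideanSpace ℂ (Fin n)) (hz : z ∈ Ω) (hball : closedBall z ε ⊆ Ω) :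
    (n : ℝ) * ψ z ^ (-(1 : ℝ) / n) * (⨍ w in ball z ε, ψ w ^ ((1 : ℝ) / n))
      ≤ (∑ i, ∑ j, cHessInvT u z i j * ⨍ w in ball z ε, cHess u w i j).re :=
  hessian_average_inequality_general n Ω hΩ u ψ hu hpsh hψc hψpos hMA ε z hz hball
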